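/- Let X be a quandle of type m, and let MCQ(X) = ⊔_{x∈X} {x}×Z_m be the associated multiple conjugation quandle of the Z_m-family of quandles (X, {*^i}), with (x,g)*(y,h) = (x *^h y, g) and (x,g)(x,h) = (x, g+h). Then a subset A ⊆ X is a connected component of X if and only if ⊔_{x∈A} {x}×Z_m is a connected component of MCQ(X). In particular, X is connected if and only if MCQ(X) is connected. -/
import Mathlib


/-- A quandle structure. -/
structure QuandleStr (X : Type*) where
  op : X → X → X
  idem : ∀ a, op a a = a
  bij : ∀ a, Function.Bijective fun x => op x a
  distrib : ∀ a b c, op (op a b) c = op (op a c) (op b c)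

/-- The operation of the associated multiple conjugation quandle
`MCQ(X) = ⊔_{x∈X} {x} × ℤ_m` of the `ℤ_m`-family of quandles `(X, {*^i})`:
`(x,g)*(y,h) = (x *^h y, g)` (here `ℤ_m` is abelian, so `h⁻¹gh = g`). -/
def mcqOp {X : Type*} (Q : QuandleStr X) (m : ℕ) (p q : X × ZMod m) : X × ZMod m :=
  ((fun z => Q.op z q.1)^[q.2.val] p.1, p.2)

/-- The orbit relation of the inner automorphism group of the quandle `X`. -/
def qRel {X : Type*} (Q : QuandleStr X) : X → X → Prop :=
  Relation.EqvGen fun x y => ∃ c, Q.op x c = y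

/-- The orbit relation on the index set (= set of group components) of
`MCQ(X)`: it relates `u` and `v` when some inner automorphism of `MCQ(X)`
sends the identity `(u,0)` of the component of `u` to the identity `(v,0)`. -/
def mRel {X : Type*} (Q : QuandleStr X) (m : ℕ) : X → X → Prop :=
  Relation.EqvGen fun u v => ∃ q : X × ZMod m, mcqOp Q m (u, 0) q = (v, 0)

/-- Let `X` be a quandle of type `m` and `MCQ(X) = ⊔_{x∈X} {x} × ℤ_m` the
associated multiple conjugation quandle.  A subset `A ⊆ X` is a connected
component of `X` iff `⊔_{x∈A} {x} × ℤ_m` is a connected component of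
`MCQ(X)` (components of `MCQ(X)` are indexed by the orbits of the index set
`X` under `mRel`).  In particular, `X` is connected iff `MCQ(X)` is
connected. -/
theorem stmt_18 {X : Type*} (Q : QuandleStr X) (m : ℕ) (hm : 0 < m)
    (htype : ∀ x y : X, (fun z => Q.op z y)^[m] x = x)
    (hmin : ∀ m', 0 < m' → (∀ x y : X, (fun z => Q.op z y)^[m'] x = x) → m ≤ m') :
    (∀ A : Set X,
        (∃ a, A = {b | qRel Q a b}) ↔ (∃ a, A = {b | mRel Q m a b})) ∧
      ((∀ a b : X, qRel Q a b) ↔ ∀ a b : X, mRel Q m a b) := by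
  have hiter : ∀ (k : ℕ) (u c : X), qRel Q u ((fun z => Q.op z c)^[k] u) := by
    intro k u c
    induction k with
    | zero => exact Relation.EqvGen.refl u
    | succ n ih =>
      rw [Function.iterate_succ_apply']
      exact Relation.EqvGen.trans _ _ _ ih
        (Relation.EqvGen.rel _ _ ⟨c, rfl⟩)
  have key : ∀ u v : X, qRel Q u v ↔ mRel Q m u v := by
    intro u v
    constructor
    · intro h
      induction h with
      | rel x y hxy =>
        obtain ⟨c, hc⟩ := hxy
        rcases Nat.lt_or_ge 1 m with hm1 | hm1
        · refine Relation.EqvGen.rel _ _ ⟨(c, 1), ?_⟩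
          have : ((1 : ZMod m)).val = 1 := by
            haveI : Fact (1 < m) := ⟨hm1⟩
            exact ZMod.val_one m
          simp [mcqOp, this, hc]
        · -- m = 1, so op x y = x, hence x = y
          have hm1' : m = 1 := le_antisymm hm1 hm
          have := htype x c
          rw [hm1'] at this
          simp at this
          rw [this] at hc
          rw [← hc]
          exact Relation.EqvGen.refl x
      | refl x => exact Relation.EqvGen.refl x
      | symm x y _ ih => exact Relation.EqvGen.symm _ _ ih
      | trans x y z _ _ ih1 ih2 => exact Relation.EqvGen.trans _ _ _ ih1 ih2
    · intro h
      induction h with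
      | rel x y hxy =>
        obtain ⟨q, hq⟩ := hxy
        have : (fun z => Q.op z q.1)^[q.2.val] x = y := by
          simpa [mcqOp] using congrArg Prod.fst hq
        rw [← this]
        exact hiter _ _ _
      | refl x => exact Relation.EqvGen.refl x
      | symm x y _ ih => exact Relation.EqvGen.symm _ _ ih
      | trans x y z _ _ ih1 ih2 => exact Relation.EqvGen.trans _ _ _ ih1 ih2
  constructor
  · intro A
    constructor
    · rintro ⟨a, rfl⟩
      exact ⟨a, by ext b; simp [key]⟩
    · rintro ⟨a, rfl⟩
      exact ⟨a, by ext b; simp [key]⟩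
  · constructor
    · intro h a b; exact (key a b).mp (h a b)
    · intro h a b; exact (key a b).mpr (h a b)
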